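/- arXiv:1608.02154 — 3 statements merged into one kernel-verified Lean document; each statement's English description precedes it below -/
import Mathlib

section
/- In the coalescence setting (G is the coalescence of H₁ and H₂ via the non-isolated vertex x), if G is weak bicritical, then x is a critical vertex of both H₁ and H₂, i.e., γ(H₁ − x) < γ(H₁) and γ(H₂ − x) < γ(H₂). -/
open SimpleGraph Set

/-- `S` is a dominating set of the induced subgraph of `G` on the vertex set `A`:
`S ⊆ A` and every vertex of `A` is in the closed neighborhood of some vertex of `S`. -/
def IsDomOn {V : Type*} (G : SimpleGraph V) (A S : Set V) : Prop :=
  S ⊆ A ∧ ∀ v ∈ A, ∃ s ∈ S, s = v ∨ G.Adj s v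

/-- The domination number of the induced subgraph of `G` on the vertex set `A`. -/
noncomputable def domNumOn {V : Type*} (G : SimpleGraph V) (A : Set V) : ℕ :=
  sInf {n | ∃ S : Set V, IsDomOn G A S ∧ S.ncard = n}

/-- The domination number of `G`. -/
noncomputable def domNum {V : Type*} (G : SimpleGraph V) : ℕ :=
  domNumOn G Set.univ

/-- `y` is a critical vertex of the induced subgraph of `G` on `A`:
deleting `y` decreases the domination number. -/
def IsCritVertexOn {V : Type*} (G : SimpleGraph V) (A : Set V) (y : V) : Prop :=
  domNumOn G (A \ {y}) < domNumOn G A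

/-- The induced subgraph of `G` on `A` is critical: all its vertices are critical. -/
def CriticalOn {V : Type*} (G : SimpleGraph V) (A : Set V) : Prop :=
  ∀ y ∈ A, IsCritVertexOn G A y

/-- The induced subgraph of `G` on `A` is weak bicritical: no vertex deletion increases the
domination number (`V⁺ = ∅`), and deleting any vertex that keeps the domination number
unchanged (a vertex of `V⁰`) yields a critical graph. -/
def WeakBicriticalOn {V : Type*} (G : SimpleGraph V) (A : Set V) : Prop :=
  (∀ y ∈ A, domNumOn G (A \ {y}) ≤ domNumOn G A) ∧
  (∀ y ∈ A, domNumOn G (A \ {y}) = domNumOn G A → CriticalOn G (A \ {y}))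

lemma isDomOn_self {V : Type*} (G : SimpleGraph V) (A : Set V) : IsDomOn G A A :=
  ⟨subset_rfl, fun v hv => ⟨v, hv, Or.inl rfl⟩⟩

lemma domNumOn_exists {V : Type*} (G : SimpleGraph V) (A : Set V) :
    ∃ S : Set V, IsDomOn G A S ∧ S.ncard = domNumOn G A := by
  have hne : {n | ∃ S : Set V, IsDomOn G A S ∧ S.ncard = n}.Nonempty :=
    ⟨A.ncard, A, isDomOn_self G A, rfl⟩
  exact Nat.sInf_mem hne

lemma domNumOn_le {V : Type*} (G : SimpleGraph V) {A S : Set V} (h : IsDomOn G A S) :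
    domNumOn G A ≤ S.ncard :=
  Nat.sInf_le ⟨S, h, rfl⟩

lemma domNumOn_union_le {V : Type*} [Fintype V] (G : SimpleGraph V) (A B : Set V) :
    domNumOn G (A ∪ B) ≤ domNumOn G A + domNumOn G B := by
  obtain ⟨S, hS, hSc⟩ := domNumOn_exists G A
  obtain ⟨T, hT, hTc⟩ := domNumOn_exists G B
  have hST : IsDomOn G (A ∪ B) (S ∪ T) := by
    refine ⟨union_subset_union hS.1 hT.1, ?_⟩
    rintro v (hv | hv)
    · obtain ⟨s, hs, h⟩ := hS.2 v hv; exact ⟨s, Or.inl hs, h⟩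
    · obtain ⟨s, hs, h⟩ := hT.2 v hv; exact ⟨s, Or.inr hs, h⟩
  calc domNumOn G (A ∪ B) ≤ (S ∪ T).ncard := domNumOn_le G hST
    _ ≤ S.ncard + T.ncard := Set.ncard_union_le S T
    _ = _ := by rw [hSc, hTc]

/-- Coalescence: if G is weak bicritical, then x is a critical vertex of both H₁ and H₂. -/
theorem stmt_15 {V : Type*} [Fintype V] (G : SimpleGraph V) (x : V) (V1 V2 : Set V)
    (hunion : V1 ∪ V2 = Set.univ) (hinter : V1 ∩ V2 = {x})
    (hsep : ∀ a ∈ V1, ∀ b ∈ V2, a ≠ x → b ≠ x → ¬ G.Adj a b)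
    (hx1 : ∃ a ∈ V1, G.Adj x a) (hx2 : ∃ b ∈ V2, G.Adj x b)
    (hwb : WeakBicriticalOn G Set.univ) :
    IsCritVertexOn G V1 x ∧ IsCritVertexOn G V2 x := by
  obtain ⟨a, ha1, hxa⟩ := hx1
  obtain ⟨b, hb2, hxb⟩ := hx2
  have hax : a ≠ x := fun h => G.irrefl (h ▸ hxa)
  have hbx : b ≠ x := fun h => G.irrefl (h ▸ hxb)
  have hxint : x ∈ V1 ∩ V2 := by rw [hinter]; rfl
  have hxV1 : x ∈ V1 := hxint.1
  have hmemV : ∀ v : V, v ∈ V1 ∨ v ∈ V2 := fun v => by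
    have : v ∈ V1 ∪ V2 := by rw [hunion]; exact mem_univ v
    exact this
  have heqx : ∀ v, v ∈ V1 → v ∈ V2 → v = x := fun v h1 h2 => by
    have : v ∈ V1 ∩ V2 := ⟨h1, h2⟩
    rw [hinter] at this; exact this
  -- the splitting lower bound
  have split : ∀ B₁ B₂ : Set V, B₁ ⊆ V1 \ {x} → B₂ ⊆ V2 \ {x} →
      domNumOn G B₁ + domNumOn G B₂ ≤ domNumOn G (B₁ ∪ B₂) := by
    intro B₁ B₂ h₁ h₂
    obtain ⟨D, hD, hDc⟩ := domNumOn_exists G (B₁ ∪ B₂)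
    have hdisj : Disjoint B₁ B₂ := by
      rw [Set.disjoint_left]
      intro v hv1 hv2
      exact (h₁ hv1).2 (heqx v (h₁ hv1).1 (h₂ hv2).1)
    have hD1 : IsDomOn G B₁ (D ∩ B₁) := by
      refine ⟨inter_subset_right, ?_⟩
      intro v hv
      obtain ⟨s, hs, hsv⟩ := hD.2 v (Or.inl hv)
      refine ⟨s, ⟨hs, ?_⟩, hsv⟩
      rcases hD.1 hs with hsB | hsB
      · exact hsB
      · exfalso
        rcases hsv with rfl | hadj
        · exact Set.disjoint_left.mp hdisj hv hsB
        · exact hsep v (h₁ hv).1 s (h₂ hsB).1 (h₁ hv).2 (h₂ hsB).2 hadj.symm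
    have hD2 : IsDomOn G B₂ (D ∩ B₂) := by
      refine ⟨inter_subset_right, ?_⟩
      intro v hv
      obtain ⟨s, hs, hsv⟩ := hD.2 v (Or.inr hv)
      refine ⟨s, ⟨hs, ?_⟩, hsv⟩
      rcases hD.1 hs with hsB | hsB
      · exfalso
        rcases hsv with rfl | hadj
        · exact Set.disjoint_left.mp hdisj hsB hv
        · exact hsep s (h₁ hsB).1 v (h₂ hv).1 (h₁ hsB).2 (h₂ hv).2 hadj
      · exact hsB
    calc domNumOn G B₁ + domNumOn G B₂ ≤ (D ∩ B₁).ncard + (D ∩ B₂).ncard :=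
          add_le_add (domNumOn_le G hD1) (domNumOn_le G hD2)
      _ = ((D ∩ B₁) ∪ (D ∩ B₂)).ncard :=
          (Set.ncard_union_eq (hdisj.mono inter_subset_right inter_subset_right)).symm
      _ ≤ D.ncard := Set.ncard_le_ncard
          (union_subset inter_subset_left inter_subset_left) (Set.toFinite D)
      _ = _ := hDc
  -- set identities
  have hA : Set.univ \ {x} = (V1 \ {x}) ∪ (V2 \ {x}) := by
    ext v
    simp only [mem_diff, mem_univ, true_and, mem_union, mem_singleton_iff]
    constructor
    · intro hv
      rcases hmemV v with h | h
      · exact Or.inl ⟨h, hv⟩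
      · exact Or.inr ⟨h, hv⟩
    · rintro (⟨_, h⟩ | ⟨_, h⟩) <;> exact h
  have hU1 : V1 ∪ (V2 \ {x}) = (Set.univ : Set V) := by
    apply eq_univ_of_forall
    intro v
    rcases hmemV v with h | h
    · exact Or.inl h
    · by_cases hvx : v = x
      · exact Or.inl (hvx ▸ hxV1)
      · exact Or.inr ⟨h, hvx⟩
  have hU2 : (V1 \ {x}) ∪ V2 = (Set.univ : Set V) := by
    apply eq_univ_of_forall
    intro v
    rcases hmemV v with h | h
    · by_cases hvx : v = x
      · exact Or.inr (hvx ▸ hxint.2)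
      · exact Or.inl ⟨h, hvx⟩
    · exact Or.inr h
  have ha_id : (Set.univ \ {x}) \ {a} = ((V1 \ {x}) \ {a}) ∪ (V2 \ {x}) := by
    ext v
    simp only [mem_diff, mem_univ, true_and, mem_union, mem_singleton_iff]
    constructor
    · rintro ⟨hvx, hva⟩
      rcases hmemV v with h | h
      · exact Or.inl ⟨⟨h, hvx⟩, hva⟩
      · exact Or.inr ⟨h, hvx⟩
    · rintro (⟨⟨_, hvx⟩, hva⟩ | ⟨h, hvx⟩)
      · exact ⟨hvx, hva⟩
      · exact ⟨hvx, fun hva => hax (heqx a ha1 (hva ▸ h))⟩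
  have hb_id : (Set.univ \ {x}) \ {b} = (V1 \ {x}) ∪ ((V2 \ {x}) \ {b}) := by
    ext v
    simp only [mem_diff, mem_univ, true_and, mem_union, mem_singleton_iff]
    constructor
    · rintro ⟨hvx, hvb⟩
      rcases hmemV v with h | h
      · exact Or.inl ⟨h, hvx⟩
      · exact Or.inr ⟨⟨h, hvx⟩, hvb⟩
    · rintro (⟨h, hvx⟩ | ⟨⟨_, hvx⟩, hvb⟩)
      · exact ⟨hvx, fun hvb => hbx (heqx b (hvb ▸ h) hb2)⟩
      · exact ⟨hvx, hvb⟩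
  -- basic inequalities
  have h_split_main : domNumOn G (V1 \ {x}) + domNumOn G (V2 \ {x})
      ≤ domNumOn G (Set.univ \ {x}) := by
    rw [hA]; exact split _ _ subset_rfl subset_rfl
  have hub1 : domNumOn G Set.univ ≤ domNumOn G V1 + domNumOn G (V2 \ {x}) := by
    rw [← hU1]; exact domNumOn_union_le G _ _
  have hub2 : domNumOn G Set.univ ≤ domNumOn G (V1 \ {x}) + domNumOn G V2 := by
    rw [← hU2]; exact domNumOn_union_le G _ _
  have hub_x : domNumOn G (Set.univ \ {x}) ≤ domNumOn G (V1 \ {x}) + domNumOn G (V2 \ {x}) := by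
    rw [hA]; exact domNumOn_union_le G _ _
  have hle := hwb.1 x (mem_univ x)
  rcases eq_or_lt_of_le hle with heq | hlt
  · -- the "γ(G-x) = γ(G)" case is impossible
    exfalso
    have hcrit : CriticalOn G (Set.univ \ {x}) := hwb.2 x (mem_univ x) heq
    have hca : domNumOn G ((Set.univ \ {x}) \ {a}) < domNumOn G (Set.univ \ {x}) :=
      hcrit a ⟨mem_univ a, hax⟩
    have hcb : domNumOn G ((Set.univ \ {x}) \ {b}) < domNumOn G (Set.univ \ {x}) :=
      hcrit b ⟨mem_univ b, hbx⟩
    have h1 : domNumOn G ((V1 \ {x}) \ {a}) + domNumOn G (V2 \ {x})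
        ≤ domNumOn G ((Set.univ \ {x}) \ {a}) := by
      rw [ha_id]; exact split _ _ (diff_subset.trans subset_rfl) subset_rfl
    have h2 : domNumOn G (V1 \ {x}) + domNumOn G ((V2 \ {x}) \ {b})
        ≤ domNumOn G ((Set.univ \ {x}) \ {b}) := by
      rw [hb_id]; exact split _ _ subset_rfl (diff_subset.trans subset_rfl)
    obtain ⟨D₁, hD₁, hD₁c⟩ := domNumOn_exists G ((V1 \ {x}) \ {a})
    obtain ⟨D₂, hD₂, hD₂c⟩ := domNumOn_exists G ((V2 \ {x}) \ {b})
    have hdom : IsDomOn G Set.univ (insert x (D₁ ∪ D₂)) := by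
      refine ⟨subset_univ _, ?_⟩
      intro v _
      by_cases hvx : v = x
      · exact ⟨x, mem_insert _ _, Or.inl hvx.symm⟩
      by_cases hva : v = a
      · exact ⟨x, mem_insert _ _, Or.inr (hva ▸ hxa)⟩
      by_cases hvb : v = b
      · exact ⟨x, mem_insert _ _, Or.inr (hvb ▸ hxb)⟩
      rcases hmemV v with h | h
      · obtain ⟨s, hs, hsv⟩ := hD₁.2 v ⟨⟨h, hvx⟩, hva⟩
        exact ⟨s, mem_insert_of_mem _ (Or.inl hs), hsv⟩
      · obtain ⟨s, hs, hsv⟩ := hD₂.2 v ⟨⟨h, hvx⟩, hvb⟩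
        exact ⟨s, mem_insert_of_mem _ (Or.inr hs), hsv⟩
    have hgle := domNumOn_le G hdom
    have hc : (insert x (D₁ ∪ D₂)).ncard ≤ D₁.ncard + D₂.ncard + 1 := by
      have h3 := Set.ncard_insert_le x (D₁ ∪ D₂)
      have h4 := Set.ncard_union_le D₁ D₂
      omega
    omega
  · constructor
    · show domNumOn G (V1 \ {x}) < domNumOn G V1
      omega
    · show domNumOn G (V2 \ {x}) < domNumOn G V2
      omega
end

section
/- Let G be a graph and x a vertex of G such that every neighbor of x is a critical vertex of G. If a set S of vertices of G dominates N_G[x] (i.e., every vertex of N_G[x] lies in the closed neighborhood of some vertex of S) and S contains at most one vertex at distance at most 2 from x, then x ∈ S and x is the unique vertex of S at distance at most 2 from x. -/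
open SimpleGraph Set

/-- Let x be a vertex of G all of whose neighbors are critical vertices of G.  If a set S
dominates N_G[x] and S contains at most one vertex at distance at most 2 from x, then
x ∈ S and x is the unique vertex of S at distance at most 2 from x. -/
theorem stmt_18 {V : Type*} [Fintype V] (G : SimpleGraph V) (x : V)
    (hcrit : ∀ z : V, G.Adj x z → IsCritVertexOn G Set.univ z) (S : Set V)
    (hdom : ∀ v : V, (v = x ∨ G.Adj x v) → ∃ s ∈ S, s = v ∨ G.Adj s v)
    (hone : ∀ s ∈ S, ∀ t ∈ S,
      (s = x ∨ G.Adj x s ∨ ∃ w, G.Adj x w ∧ G.Adj w s) →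
      (t = x ∨ G.Adj x t ∨ ∃ w, G.Adj x w ∧ G.Adj w t) → s = t) :
    x ∈ S ∧ ∀ s ∈ S, (s = x ∨ G.Adj x s ∨ ∃ w, G.Adj x w ∧ G.Adj w s) → s = x := by
  obtain ⟨s, hsS, hs⟩ := hdom x (Or.inl rfl)
  have hsx : s = x := by
    by_contra hne
    have hadj : G.Adj x s := by
      rcases hs with h | h
      · exact absurd h hne
      · exact h.symm
    -- s dominates all of N[x]
    have hdomall : ∀ v, (v = x ∨ G.Adj x v) → s = v ∨ G.Adj s v := by
      intro v hv
      obtain ⟨t, htS, ht⟩ := hdom v hv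
      have hts : t = s := by
        apply hone t htS s hsS _ (Or.inr (Or.inl hadj))
        rcases hv with rfl | hv
        · rcases ht with rfl | ht
          · exact Or.inl rfl
          · exact Or.inr (Or.inl ht.symm)
        · rcases ht with rfl | ht
          · exact Or.inr (Or.inl hv)
          · exact Or.inr (Or.inr ⟨v, hv, ht.symm⟩)
      subst hts; exact ht
    have hcs : IsCritVertexOn G Set.univ s := hcrit s hadj
    have hne' : {n | ∃ D : Set V, IsDomOn G (Set.univ \ {s}) D ∧ D.ncard = n}.Nonempty :=
      ⟨(Set.univ \ {s}).ncard, Set.univ \ {s},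
        ⟨subset_rfl, fun v hv => ⟨v, hv, Or.inl rfl⟩⟩, rfl⟩
    obtain ⟨D, hD, hcard⟩ := Nat.sInf_mem hne'
    have hDuniv : IsDomOn G Set.univ D := by
      refine ⟨Set.subset_univ _, fun v _ => ?_⟩
      by_cases hv : v = s
      · subst hv
        obtain ⟨d, hdD, hd⟩ := hD.2 x ⟨trivial, fun h => hadj.ne (Set.eq_of_mem_singleton h)⟩
        refine ⟨d, hdD, ?_⟩
        have hdNx : d = x ∨ G.Adj x d := by
          rcases hd with rfl | hd
          · exact Or.inl rfl
          · exact Or.inr hd.symm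
        rcases hdomall d hdNx with h | h
        · exact absurd (Set.mem_singleton_iff.mpr h.symm) (hD.1 hdD).2
        · exact Or.inr h.symm
      · obtain ⟨d, hdD, hd⟩ := hD.2 v ⟨trivial, hv⟩
        exact ⟨d, hdD, hd⟩
    have hle : domNumOn G Set.univ ≤ domNumOn G (Set.univ \ {s}) := by
      rw [domNumOn]
      exact Nat.sInf_le ⟨D, hDuniv, hcard⟩
    exact absurd hcs (by simp only [IsCritVertexOn]; omega)
  subst hsx
  exact ⟨hsS, fun t htS ht => hone t htS s hsS ht (Or.inl rfl)⟩
end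

section
/- Let k ≥ 3 be an integer and let G be a connected weak k-bicritical graph. Suppose G has a diametrical vertex x such that every vertex at distance 1, 2, or 3 from x is a critical vertex of G, and there are at least two vertices at distance exactly 2 from x. Then diam(G) ≤ 2k − 3. -/
open SimpleGraph Set

set_option linter.unusedSectionVars false

section helpers
variable {V : Type*} [Fintype V] (G : SimpleGraph V)

lemma isDomOn_refl (A : Set V) : IsDomOn G A A :=
  ⟨subset_rfl, fun v hv => ⟨v, hv, Or.inl rfl⟩⟩

lemma exists_domOn_min (A : Set V) :
    ∃ S : Set V, IsDomOn G A S ∧ S.ncard = domNumOn G A := by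
  have hne : {n | ∃ S : Set V, IsDomOn G A S ∧ S.ncard = n}.Nonempty :=
    ⟨A.ncard, A, isDomOn_refl G A, rfl⟩
  obtain ⟨S, hS, hc⟩ := Nat.sInf_mem hne
  exact ⟨S, hS, hc⟩

lemma domNumOn_le_ncard {A S : Set V} (h : IsDomOn G A S) : domNumOn G A ≤ S.ncard :=
  Nat.sInf_le ⟨S, h, rfl⟩

variable {G}

lemma dist_le_succ_of_adj (hconn : G.Connected) {a b c : V} (h : G.Adj b c) :
    G.dist a c ≤ G.dist a b + 1 := by
  have h1 : G.dist b c ≤ 1 := by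
    have := SimpleGraph.dist_le h.toWalk
    simpa using this
  calc G.dist a c ≤ G.dist a b + G.dist b c := hconn.dist_triangle
    _ ≤ G.dist a b + 1 := by omega

lemma eq_of_dist_eq_zero' (hconn : G.Connected) {a b : V} (h : G.dist a b = 0) : a = b := by
  obtain ⟨p, hp⟩ := (hconn a b).exists_walk_length_eq_dist
  exact SimpleGraph.Walk.eq_of_length_eq_zero (p := p) (by omega)

lemma adj_of_dist_eq_one' (hconn : G.Connected) {a b : V} (h : G.dist a b = 1) : G.Adj a b := by
  obtain ⟨p, hp⟩ := (hconn a b).exists_walk_length_eq_dist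
  rw [h] at hp
  cases p with
  | nil => simp at hp
  | cons hadj q =>
    have hq0 : q.length = 0 := by simpa using hp
    have := SimpleGraph.Walk.eq_of_length_eq_zero hq0
    exact this ▸ hadj

lemma exists_on_level (hconn : G.Connected) (x y : V) :
    ∀ j, j ≤ G.dist x y → ∃ v, G.dist x v = j ∧ G.dist v y + j = G.dist x y := by
  intro j
  induction j with
  | zero =>
    intro _
    exact ⟨x, by simp [SimpleGraph.dist_self]⟩
  | succ n ih =>
    intro hle
    obtain ⟨v, hv1, hv2⟩ := ih (by omega)
    have hvy : 1 ≤ G.dist v y := by omega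
    obtain ⟨p, hp⟩ := (hconn v y).exists_walk_length_eq_dist
    cases p with
    | nil => simp at hp; omega
    | cons hadj q =>
      rename_i v'
      have hq : q.length = G.dist v y - 1 := by
        simp only [SimpleGraph.Walk.length_cons] at hp; omega
      have hv'y : G.dist v' y ≤ G.dist v y - 1 := by
        have := SimpleGraph.dist_le q
        omega
      have h1 : G.dist x v' ≤ n + 1 := by
        have := dist_le_succ_of_adj hconn (a := x) hadj
        omega
      have h2 : G.dist x y ≤ G.dist x v' + G.dist v' y := hconn.dist_triangle
      exact ⟨v', by omega, by omega⟩

end helpers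

/-- Let k ≥ 3 and let G be a connected weak k-bicritical graph with a diametrical vertex x
such that every vertex at distance 1, 2 or 3 from x is critical and at least two vertices
are at distance exactly 2 from x. Then diam(G) ≤ 2k − 3. -/
theorem stmt_19 {V : Type*} [Fintype V] (G : SimpleGraph V) (k : ℕ) (hk : 3 ≤ k)
    (hconn : G.Connected) (hwb : WeakBicriticalOn G Set.univ) (hdom : domNum G = k)
    (x : V) (hdiam : ∃ y : V, G.dist x y = G.diam)
    (hcrit : ∀ y : V, (G.dist x y = 1 ∨ G.dist x y = 2 ∨ G.dist x y = 3) →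
      IsCritVertexOn G Set.univ y)
    (h2 : 2 ≤ {y : V | G.dist x y = 2}.ncard) :
    G.diam ≤ 2 * k - 3 := by
  classical
  obtain ⟨y, hy⟩ := hdiam
  rw [← hy]
  by_contra hcon
  push_neg at hcon
  have hdomuniv : domNumOn G Set.univ = k := hdom
  have hdomge : ∀ D : Set V, IsDomOn G Set.univ D → k ≤ D.ncard := by
    intro D hD
    rw [← hdomuniv]
    exact domNumOn_le_ncard G hD
  set d := G.dist x y with hddef
  have hdge : 2 * k - 2 ≤ d := by omega
  have hlev : ∀ j, j ≤ d → ∃ v, G.dist x v = j := by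
    intro j hj
    obtain ⟨v, hv, _⟩ := exists_on_level hconn x y j hj
    exact ⟨v, hv⟩
  -- minimum dominating set of G - z for a critical vertex z
  have hcritset : ∀ z : V, IsCritVertexOn G Set.univ z →
      ∃ S : Set V, S.ncard + 1 ≤ k ∧ (∀ t, t ≠ z → ∃ s ∈ S, s = t ∨ G.Adj s t) ∧
        (∀ s ∈ S, s ≠ z ∧ ¬ G.Adj s z) := by
    intro z hz
    obtain ⟨S, hS, hc⟩ := exists_domOn_min G (Set.univ \ {z})
    have hlt : S.ncard < k := by
      rw [hc, ← hdomuniv]; exact hz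
    have hdomS : ∀ t, t ≠ z → ∃ s ∈ S, s = t ∨ G.Adj s t := by
      intro t ht
      exact hS.2 t (by simp [ht])
    refine ⟨S, by omega, hdomS, ?_⟩
    intro s hs
    have hsz : s ≠ z := by
      have := hS.1 hs
      simp only [Set.mem_diff, Set.mem_univ, true_and, Set.mem_singleton_iff] at this
      exact this
    refine ⟨hsz, ?_⟩
    intro hadj
    have hD : IsDomOn G Set.univ S := by
      refine ⟨subset_univ _, fun v _ => ?_⟩
      by_cases hvz : v = z
      · exact ⟨s, hs, Or.inr (hvz ▸ hadj)⟩
      · exact hdomS v hvz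
    have := hdomge S hD
    omega
  -- for any z and any u ≠ z there is a small set dominating everything except z,u
  have hstep : ∀ z u : V, u ≠ z →
      ∃ S : Set V, S.ncard + 1 ≤ k ∧ ∀ t, t ≠ z → t ≠ u → ∃ s ∈ S, s = t ∨ G.Adj s t := by
    intro z u hne
    have hle : domNumOn G (Set.univ \ {z}) ≤ k := by
      rw [← hdomuniv]; exact hwb.1 z (mem_univ z)
    rcases lt_or_eq_of_le hle with hlt | heq
    · obtain ⟨S, h1, h2', _⟩ := hcritset z (by
        rw [IsCritVertexOn, hdomuniv]; exact hlt)
      exact ⟨S, h1, fun t htz _ => h2' t htz⟩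
    · have hcg : CriticalOn G (Set.univ \ {z}) := by
        apply hwb.2 z (mem_univ z)
        rw [heq, hdomuniv]
      have hu : IsCritVertexOn G (Set.univ \ {z}) u := hcg u (by simp [hne])
      obtain ⟨S, hS, hc⟩ := exists_domOn_min G ((Set.univ \ {z}) \ {u})
      have hlt2 : S.ncard < k := by
        rw [hc, ← heq]; exact hu
      refine ⟨S, by omega, ?_⟩
      intro t h1t h2t
      exact hS.2 t (by simp [h1t, h2t])
  -- chain contradiction lemma
  have SS : ∀ s : ℕ, ∀ a : ℕ, ∀ T : Set V, T.ncard ≤ s →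
      (∀ v, a ≤ G.dist x v → ∃ t ∈ T, t = v ∨ G.Adj t v) →
      a + 2 * s ≤ d → False := by
    intro s
    induction s with
    | zero =>
      intro a T hT hcov hle
      obtain ⟨v, hv⟩ := hlev a (by omega)
      obtain ⟨t, ht, _⟩ := hcov v (by omega)
      have hTe : T = ∅ := (Set.ncard_eq_zero T.toFinite).mp (by omega)
      rw [hTe] at ht
      exact ht
    | succ n ih =>
      intro a T hT hcov hle
      obtain ⟨z, hz⟩ := hlev (a + 1) (by omega)
      obtain ⟨u, hu⟩ := hlev a (by omega)
      have hune : u ≠ z := by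
        intro h; rw [h, hz] at hu; omega
      obtain ⟨S, hScard, hSdom⟩ := hstep z u hune
      have hD : IsDomOn G Set.univ ({g : V | g ∈ S ∧ G.dist x g ≤ a} ∪ T) := by
        refine ⟨subset_univ _, fun v _ => ?_⟩
        by_cases hva : a ≤ G.dist x v
        · obtain ⟨t, ht, hc⟩ := hcov v hva
          exact ⟨t, Or.inr ht, hc⟩
        · have hvz : v ≠ z := by intro h; rw [h, hz] at hva; omega
          have hvu : v ≠ u := by intro h; rw [h, hu] at hva; omega
          obtain ⟨g, hg, hgc⟩ := hSdom v hvz hvu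
          refine ⟨g, Or.inl ⟨hg, ?_⟩, hgc⟩
          rcases hgc with h | h
          · rw [h]; omega
          · have := dist_le_succ_of_adj hconn (a := x) h.symm
            omega
      have h1 : k ≤ ({g : V | g ∈ S ∧ G.dist x g ≤ a} ∪ T).ncard := hdomge _ hD
      have h2' : ({g : V | g ∈ S ∧ G.dist x g ≤ a} ∪ T).ncard ≤
          ({g : V | g ∈ S ∧ G.dist x g ≤ a}).ncard + T.ncard := Set.ncard_union_le _ _
      have hsnsub : {g : V | g ∈ S ∧ G.dist x g ≤ a} ⊆ S := fun g hg => hg.1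
      have h3 : (S \ {g : V | g ∈ S ∧ G.dist x g ≤ a}).ncard =
          S.ncard - ({g : V | g ∈ S ∧ G.dist x g ≤ a}).ncard := Set.ncard_diff hsnsub
      have h4 : ({g : V | g ∈ S ∧ G.dist x g ≤ a}).ncard ≤ S.ncard :=
        Set.ncard_le_ncard hsnsub S.toFinite
      have hcov' : ∀ v, a + 2 ≤ G.dist x v →
          ∃ t ∈ S \ {g : V | g ∈ S ∧ G.dist x g ≤ a}, t = v ∨ G.Adj t v := by
        intro v hv
        have hvz : v ≠ z := by intro h; rw [h, hz] at hv; omega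
        have hvu : v ≠ u := by intro h; rw [h, hu] at hv; omega
        obtain ⟨g, hg, hgc⟩ := hSdom v hvz hvu
        have hga : ¬ G.dist x g ≤ a := by
          rcases hgc with h | h
          · rw [h]; omega
          · have := dist_le_succ_of_adj hconn (a := x) h
            omega
        exact ⟨g, ⟨hg, fun hmem => hga hmem.2⟩, hgc⟩
      exact ih (a + 2) (S \ {g : V | g ∈ S ∧ G.dist x g ≤ a}) (by omega) hcov' (by omega)
  -- extraction lemma
  have EXC : ∀ (S : Set V) (c : ℕ) (hole : V) (B : Set V) (s : ℕ),
      B ⊆ S → (∀ b ∈ B, G.dist x b ≤ c) → G.dist x hole ≤ c + 1 →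
      (∀ t, t ≠ hole → ∃ g ∈ S, g = t ∨ G.Adj g t) →
      S.ncard ≤ s + B.ncard → c + 2 + 2 * s ≤ d → False := by
    intro S c hole B s hBS hBnear hhole hdomS hcards harith
    have hTsub : {g : V | g ∈ S ∧ c + 1 ≤ G.dist x g} ⊆ S \ B := by
      intro g hg
      refine ⟨hg.1, fun hB => ?_⟩
      have := hBnear g hB
      have := hg.2
      omega
    have hT1 : ({g : V | g ∈ S ∧ c + 1 ≤ G.dist x g}).ncard ≤ (S \ B).ncard :=
      Set.ncard_le_ncard hTsub ((S \ B).toFinite)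
    have hT2 : (S \ B).ncard = S.ncard - B.ncard := Set.ncard_diff hBS
    have hBcard : B.ncard ≤ S.ncard := Set.ncard_le_ncard hBS S.toFinite
    refine SS s (c + 2) {g : V | g ∈ S ∧ c + 1 ≤ G.dist x g} (by omega) ?_ (by omega)
    intro v hv
    have hvh : v ≠ hole := by intro h; rw [h] at hv; omega
    obtain ⟨g, hg, hgc⟩ := hdomS v hvh
    refine ⟨g, ⟨hg, ?_⟩, hgc⟩
    rcases hgc with h | h
    · rw [h]; omega
    · have := dist_le_succ_of_adj hconn (a := x) h
      omega
  -- the two level-2 vertices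
  obtain ⟨w, w', hwmem, hw'mem, hww'⟩ :=
    (Set.one_lt_ncard_iff (s := {y : V | G.dist x y = 2}) (Set.toFinite _)).mp (by omega)
  simp only [Set.mem_setOf_eq] at hwmem hw'mem
  -- kill d ≥ 2k-1
  have hdeq : d = 2 * k - 2 := by
    by_contra hne
    have hd1 : 2 * k - 1 ≤ d := by omega
    obtain ⟨z1, hz1⟩ := hlev 1 (by omega)
    obtain ⟨S, hc, hdm, _⟩ := hcritset z1 (hcrit z1 (Or.inl hz1))
    have hxz : x ≠ z1 := by
      intro h; rw [← h, SimpleGraph.dist_self] at hz1; omega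
    obtain ⟨p, hpS, hpc⟩ := hdm x hxz
    have hpd : G.dist x p ≤ 1 := by
      rcases hpc with h | h
      · rw [h, SimpleGraph.dist_self]; omega
      · have := dist_le_succ_of_adj hconn (a := x) h.symm
        rw [SimpleGraph.dist_self] at this; omega
    refine EXC S 1 z1 {p} (k - 2) (by simp [hpS]) ?_ (by omega) hdm ?_ (by omega)
    · intro b hb
      simp only [Set.mem_singleton_iff] at hb
      rw [hb]; exact hpd
    · rw [Set.ncard_singleton]; omega
  -- the dominating set for G - w
  obtain ⟨Sw, hSwc, hSwdom, hSwavoid⟩ := hcritset w (hcrit w (Or.inr (Or.inl hwmem)))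
  have hxw : x ≠ w := by
    intro h; rw [← h, SimpleGraph.dist_self] at hwmem; omega
  obtain ⟨p, hpS, hpc⟩ := hSwdom x hxw
  have hpd : G.dist x p ≤ 1 := by
    rcases hpc with h | h
    · rw [h, SimpleGraph.dist_self]; omega
    · have := dist_le_succ_of_adj hconn (a := x) h.symm
      rw [SimpleGraph.dist_self] at this; omega
  -- any member of Sw at distance ≤ 2 equals p
  have hlow : ∀ q ∈ Sw, G.dist x q ≤ 2 → q = p := by
    intro q hq hq2
    by_contra hqp
    have hBsub : ({p, q} : Set V) ⊆ Sw := by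
      intro b hb
      simp only [Set.mem_insert_iff, Set.mem_singleton_iff] at hb
      rcases hb with h | h
      · rw [h]; exact hpS
      · rw [h]; exact hq
    have hBcard : ({p, q} : Set V).ncard = 2 := Set.ncard_pair (fun h => hqp h.symm)
    rcases Nat.lt_or_ge (G.dist x q) 2 with hq1 | hq1
    · refine EXC Sw 1 w {p, q} (k - 3) hBsub ?_ (by omega) hSwdom ?_ (by omega)
      · intro b hb
        simp only [Set.mem_insert_iff, Set.mem_singleton_iff] at hb
        rcases hb with h | h
        · rw [h]; exact hpd
        · rw [h]; omega
      · rw [hBcard]; omega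
    · have hq2' : G.dist x q = 2 := by omega
      refine EXC Sw 2 w {p, q} (k - 3) hBsub ?_ (by omega) hSwdom ?_ (by omega)
      · intro b hb
        simp only [Set.mem_insert_iff, Set.mem_singleton_iff] at hb
        rcases hb with h | h
        · rw [h]; omega
        · rw [h]; omega
      · rw [hBcard]; omega
  -- p = x
  have hpx : p = x := by
    by_contra hpne
    have hp1 : G.dist x p = 1 := by
      have h0 : G.dist x p ≠ 0 := fun h => hpne (eq_of_dist_eq_zero' hconn h).symm
      omega
    have hxp : G.Adj x p := adj_of_dist_eq_one' hconn hp1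
    have hL1 : ∀ v, G.dist x v = 1 → (v = p ∨ G.Adj p v) := by
      intro v hv
      have hvw : v ≠ w := by intro h; rw [h, hwmem] at hv; omega
      obtain ⟨g, hg, hgc⟩ := hSwdom v hvw
      have hgd : G.dist x g ≤ 2 := by
        rcases hgc with h | h
        · rw [h]; omega
        · have := dist_le_succ_of_adj hconn (a := x) h.symm
          omega
      have hgp := hlow g hg hgd
      rcases hgc with h | h
      · exact Or.inl (by rw [← h, hgp])
      · exact Or.inr (by rw [← hgp]; exact h)
    obtain ⟨Sp, hSpc, hSpdom, hSpavoid⟩ := hcritset p (hcrit p (Or.inl hp1))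
    have hxp' : x ≠ p := fun h => hpne h.symm
    obtain ⟨q, hqS, hqc⟩ := hSpdom x hxp'
    have hqd : G.dist x q ≤ 1 := by
      rcases hqc with h | h
      · rw [h, SimpleGraph.dist_self]; omega
      · have := dist_le_succ_of_adj hconn (a := x) h.symm
        rw [SimpleGraph.dist_self] at this; omega
    by_cases hqx : q = x
    · exact (hSpavoid q hqS).2 (by rw [hqx]; exact hxp)
    · have hq1 : G.dist x q = 1 := by
        have h0 : G.dist x q ≠ 0 := fun h => hqx (eq_of_dist_eq_zero' hconn h).symm
        omega
      rcases hL1 q hq1 with h | h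
      · exact (hSpavoid q hqS).1 h
      · exact (hSpavoid q hqS).2 h.symm
  have hxSw : x ∈ Sw := hpx ▸ hpS
  -- the vertex e at distance 3
  obtain ⟨e, heS, hec⟩ := hSwdom w' hww'.symm
  have hed : G.dist x e = 3 := by
    have hle3 : G.dist x e ≤ 3 := by
      rcases hec with h | h
      · rw [h, hw'mem]; omega
      · have := dist_le_succ_of_adj hconn (a := x) h.symm
        omega
    by_contra hne3
    have hle2 : G.dist x e ≤ 2 := by omega
    have hep : e = p := hlow e heS hle2
    rw [hpx] at hep
    rcases hec with h | h
    · rw [hep] at h; rw [← h, SimpleGraph.dist_self] at hw'mem; omega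
    · rw [hep] at h
      have := dist_le_succ_of_adj hconn (a := x) h
      rw [SimpleGraph.dist_self] at this; omega
  have hxe : x ≠ e := by
    intro h; rw [← h, SimpleGraph.dist_self] at hed; omega
  -- uniqueness of e at distance 3 in Sw
  have huniq3 : ∀ g ∈ Sw, G.dist x g = 3 → g = e := by
    intro g hg hg3
    by_contra hge
    have hxg : x ≠ g := by
      intro h; rw [← h, SimpleGraph.dist_self] at hg3; omega
    have heg : e ≠ g := fun h => hge h.symm
    have hBsub : ({x, e, g} : Set V) ⊆ Sw := by
      intro b hb
      simp only [Set.mem_insert_iff, Set.mem_singleton_iff] at hb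
      rcases hb with h | h | h
      · rw [h]; exact hxSw
      · rw [h]; exact heS
      · rw [h]; exact hg
    have hBcard : ({x, e, g} : Set V).ncard = 3 := by
      rw [Set.ncard_insert_of_notMem (by simp [hxe, hxg]) (Set.toFinite _),
        Set.ncard_pair heg]
    have hBle : ({x, e, g} : Set V).ncard ≤ Sw.ncard :=
      Set.ncard_le_ncard hBsub Sw.toFinite
    rcases Nat.lt_or_ge k 4 with hk4 | hk4
    · omega
    · refine EXC Sw 3 w {x, e, g} (k - 4) hBsub ?_ (by omega) hSwdom ?_ (by omega)
      · intro b hb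
        simp only [Set.mem_insert_iff, Set.mem_singleton_iff] at hb
        rcases hb with h | h | h
        · rw [h, SimpleGraph.dist_self]; omega
        · rw [h]; omega
        · rw [h]; omega
      · rw [hBcard]; omega
  -- no member of Sw at distance 4
  have hno4 : ∀ g ∈ Sw, G.dist x g ≠ 4 := by
    intro g hg hg4
    have hxg : x ≠ g := by
      intro h; rw [← h, SimpleGraph.dist_self] at hg4; omega
    have heg : e ≠ g := by
      intro h; rw [← h, hed] at hg4; omega
    have hBsub : ({x, e, g} : Set V) ⊆ Sw := by
      intro b hb
      simp only [Set.mem_insert_iff, Set.mem_singleton_iff] at hb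
      rcases hb with h | h | h
      · rw [h]; exact hxSw
      · rw [h]; exact heS
      · rw [h]; exact hg
    have hBcard : ({x, e, g} : Set V).ncard = 3 := by
      rw [Set.ncard_insert_of_notMem (by simp [hxe, hxg]) (Set.toFinite _),
        Set.ncard_pair heg]
    have hBle : ({x, e, g} : Set V).ncard ≤ Sw.ncard :=
      Set.ncard_le_ncard hBsub Sw.toFinite
    rcases Nat.lt_or_ge k 4 with hk4 | hk4
    · omega
    · refine EXC Sw 4 w {x, e, g} (k - 4) hBsub ?_ (by omega) hSwdom ?_ (by omega)
      · intro b hb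
        simp only [Set.mem_insert_iff, Set.mem_singleton_iff] at hb
        rcases hb with h | h | h
        · rw [h, SimpleGraph.dist_self]; omega
        · rw [h]; omega
        · rw [h]; omega
      · rw [hBcard]; omega
  -- every vertex at distance 3 is dominated by e
  have hL3 : ∀ v, G.dist x v = 3 → (v = e ∨ G.Adj e v) := by
    intro v hv
    have hvw : v ≠ w := by intro h; rw [h, hwmem] at hv; omega
    obtain ⟨g, hg, hgc⟩ := hSwdom v hvw
    rcases hgc with h | h
    · have hge := huniq3 g hg (by rw [h]; exact hv)
      exact Or.inl (by rw [← h, hge])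
    · have hub : G.dist x g ≤ 4 := by
        have := dist_le_succ_of_adj hconn (a := x) h.symm
        omega
      have hlb : 2 ≤ G.dist x g := by
        have := dist_le_succ_of_adj hconn (a := x) h
        omega
      have h3 : G.dist x g = 3 := by
        by_contra h3ne
        rcases Nat.lt_or_ge (G.dist x g) 3 with hlt | hge'
        · have hgp := hlow g hg (by omega)
          rw [hgp, hpx, SimpleGraph.dist_self] at hlb; omega
        · exact hno4 g hg (by omega)
      have hge := huniq3 g hg h3
      exact Or.inr (by rw [← hge]; exact h)
  -- the dominating set for G - e
  obtain ⟨Se, hSec, hSedom, hSeavoid⟩ := hcritset e (hcrit e (Or.inr (Or.inr hed)))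
  obtain ⟨α, hαS, hαc⟩ := hSedom x hxe
  have hαd : G.dist x α ≤ 1 := by
    rcases hαc with h | h
    · rw [h, SimpleGraph.dist_self]; omega
    · have := dist_le_succ_of_adj hconn (a := x) h.symm
      rw [SimpleGraph.dist_self] at this; omega
  have hαuniq : ∀ g ∈ Se, G.dist x g ≤ 2 → g = α := by
    intro g hg hg2
    by_contra hgα
    have hBsub : ({α, g} : Set V) ⊆ Se := by
      intro b hb
      simp only [Set.mem_insert_iff, Set.mem_singleton_iff] at hb
      rcases hb with h | h
      · rw [h]; exact hαS
      · rw [h]; exact hg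
    have hBcard : ({α, g} : Set V).ncard = 2 := Set.ncard_pair (fun h => hgα h.symm)
    refine EXC Se 2 e {α, g} (k - 3) hBsub ?_ (by omega) hSedom ?_ (by omega)
    · intro b hb
      simp only [Set.mem_insert_iff, Set.mem_singleton_iff] at hb
      rcases hb with h | h
      · rw [h]; omega
      · rw [h]; omega
    · rw [hBcard]; omega
  have hαx : α = x := by
    by_contra hαne
    have hα1 : G.dist x α = 1 := by
      have h0 : G.dist x α ≠ 0 := fun h => hαne (eq_of_dist_eq_zero' hconn h).symm
      omega
    have hxα : G.Adj x α := adj_of_dist_eq_one' hconn hα1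
    have hL1 : ∀ v, G.dist x v = 1 → (v = α ∨ G.Adj α v) := by
      intro v hv
      have hve : v ≠ e := by intro h; rw [h, hed] at hv; omega
      obtain ⟨g, hg, hgc⟩ := hSedom v hve
      have hgd : G.dist x g ≤ 2 := by
        rcases hgc with h | h
        · rw [h]; omega
        · have := dist_le_succ_of_adj hconn (a := x) h.symm
          omega
      have hgα := hαuniq g hg hgd
      rcases hgc with h | h
      · exact Or.inl (by rw [← h, hgα])
      · exact Or.inr (by rw [← hgα]; exact h)
    obtain ⟨Sα, hSαc, hSαdom, hSαavoid⟩ := hcritset α (hcrit α (Or.inl hα1))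
    have hxα' : x ≠ α := fun h => hαne h.symm
    obtain ⟨q, hqS, hqc⟩ := hSαdom x hxα'
    have hqd : G.dist x q ≤ 1 := by
      rcases hqc with h | h
      · rw [h, SimpleGraph.dist_self]; omega
      · have := dist_le_succ_of_adj hconn (a := x) h.symm
        rw [SimpleGraph.dist_self] at this; omega
    by_cases hqx : q = x
    · exact (hSαavoid q hqS).2 (by rw [hqx]; exact hxα)
    · have hq1 : G.dist x q = 1 := by
        have h0 : G.dist x q ≠ 0 := fun h => hqx (eq_of_dist_eq_zero' hconn h).symm
        omega
      rcases hL1 q hq1 with h | h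
      · exact (hSαavoid q hqS).1 h
      · exact (hSαavoid q hqS).2 h.symm
  -- final contradiction: the dominator of w in Se
  have hwe : w ≠ e := by
    intro h; rw [h, hed] at hwmem; omega
  obtain ⟨g, hgS, hgc⟩ := hSedom w hwe
  have hgd3 : G.dist x g = 3 := by
    have hub : G.dist x g ≤ 3 := by
      rcases hgc with h | h
      · rw [h, hwmem]; omega
      · have := dist_le_succ_of_adj hconn (a := x) h.symm
        omega
    by_contra h3ne
    have h2' : G.dist x g ≤ 2 := by omega
    have hgα := hαuniq g hgS h2'
    rw [hgα, hαx] at hgc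
    rcases hgc with h | h
    · rw [← h, SimpleGraph.dist_self] at hwmem; omega
    · have := dist_le_succ_of_adj hconn (a := x) h
      rw [SimpleGraph.dist_self] at this; omega
  rcases hL3 g hgd3 with h | h
  · exact (hSeavoid g hgS).1 h
  · exact (hSeavoid g hgS).2 h.symm
end
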